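/- For n >= 2 and a pair r of opposite vertices of the punctured 2n-gon, the intersection Psi(cw(r)) ∩ Psi(ccw(r)) of the two classes of centrally symmetric triangulations containing both the clockwise and counterclockwise central chord pairs at r has cardinality equal to the Catalan number C_{n-1}. -/
import Mathlib


open scoped BigOperators

/-- `x` lies strictly inside the (clockwise) arc from `a` to `b` of the regular `m`-gon,
whose vertices are labeled by `ZMod m`. -/
def arcMem (m : ℕ) (a b x : ZMod m) : Prop :=
  0 < (x - a).val ∧ (x - a).val < (b - a).val

/-- Ordered version of the crossing predicate for the chords `{a,b}` and `{c,d}`: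
exactly one of `c, d` lies strictly inside the open arc from `a` to `b`. -/
def crossPairs (m : ℕ) (a b c d : ZMod m) : Prop :=
  (arcMem m a b c ∧ arcMem m b a d) ∨ (arcMem m a b d ∧ arcMem m b a c)

/-- Two chords of the convex `m`-gon cross (in their interiors). -/
def Crosses (m : ℕ) (e f : Sym2 (ZMod m)) : Prop :=
  ∃ a b c d : ZMod m, e = s(a, b) ∧ f = s(c, d) ∧ crossPairs m a b c d

/-- `e` is a diagonal of the convex `m`-gon: its endpoints are distinct and non-adjacent. -/
def IsDiagonal (m : ℕ) (e : Sym2 (ZMod m)) : Prop :=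
  ∃ a b : ZMod m, e = s(a, b) ∧ a ≠ b ∧ b ≠ a + 1 ∧ a ≠ b + 1

/-- A triangulation of the convex `m`-gon: a maximal set of pairwise non-crossing diagonals. -/
def IsTriangulation (m : ℕ) (T : Finset (Sym2 (ZMod m))) : Prop :=
  (∀ e ∈ T, IsDiagonal m e) ∧
  (∀ e ∈ T, ∀ f ∈ T, ¬ Crosses m e f) ∧
  (∀ e, IsDiagonal m e → e ∉ T → ∃ f ∈ T, Crosses m e f)

/-- A diagonal of the regular `(2n+2)`-gon is central if it joins two opposite vertices,
i.e. passes through the center of the polygon. -/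
def IsCentral (n : ℕ) (e : Sym2 (ZMod (2 * n + 2))) : Prop :=
  ∃ a : ZMod (2 * n + 2), e = s(a, a + (n : ZMod (2 * n + 2)) + 1)

/-- The central diagonal of the regular `(2n+2)`-gon with endpoint `a`. -/
def centralDiag (n : ℕ) (a : ZMod (2 * n + 2)) : Sym2 (ZMod (2 * n + 2)) :=
  s(a, a + (n : ZMod (2 * n + 2)) + 1)

/-- A centrally-symmetric triangulation of the regular `(2n+2)`-gon: a triangulation invariant
under 180-degree rotation, i.e. under adding `n+1` to every vertex label. -/
def CSTriangulation (n : ℕ) (T : Finset (Sym2 (ZMod (2 * n + 2)))) : Prop :=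
  IsTriangulation (2 * n + 2) T ∧
  ∀ e ∈ T, Sym2.map (· + ((n : ZMod (2 * n + 2)) + 1)) e ∈ T

/-- Chords of the punctured `2n`-gon: non-central diagonals of the `2n`-gon, or central chords
tangent to the central disc, recorded by their polygon vertex together with their orientation
(`true` = emanating clockwise, `false` = counterclockwise). -/
inductive DChord (n : ℕ) where
  | diag : Sym2 (ZMod (2 * n)) → DChord n
  | central : ZMod (2 * n) → Bool → DChord n
deriving DecidableEq

/-- Validity of a chord of the punctured `2n`-gon: a diagonal must have distinct, non-adjacent,
non-opposite endpoints (the segments joining opposite vertices would meet the disc). -/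
def DChord.IsValid (n : ℕ) : DChord n → Prop
  | .diag e => ∃ a b : ZMod (2 * n),
      e = s(a, b) ∧ a ≠ b ∧ b ≠ a + 1 ∧ a ≠ b + 1 ∧ b ≠ a + (n : ZMod (2 * n))
  | .central _ _ => True

/-- A non-central diagonal crosses the central chord at vertex `c` iff it separates `c` from the
central disc, i.e. `c` lies strictly inside the minor arc cut off by the diagonal. -/
def diagCrossCentral (n : ℕ) (e : Sym2 (ZMod (2 * n))) (c : ZMod (2 * n)) : Prop :=
  ∃ a b : ZMod (2 * n), e = s(a, b) ∧ (b - a).val < n ∧ arcMem (2 * n) a b c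

/-- The crossing relation for chords of the punctured `2n`-gon.  Two central chords cross iff
they have opposite orientations and are based at different vertex pairs. -/
def DChord.Cross (n : ℕ) : DChord n → DChord n → Prop
  | .diag e, .diag f => Crosses (2 * n) e f
  | .diag e, .central c _ => diagCrossCentral n e c
  | .central c _, .diag e => diagCrossCentral n e c
  | .central c b, .central d b' => b ≠ b' ∧ d ≠ c ∧ d ≠ c + (n : ZMod (2 * n))

/-- 180-degree rotation of a chord of the punctured `2n`-gon. -/
def DChord.rot (n : ℕ) : DChord n → DChord n
  | .diag e => .diag (Sym2.map (· + (n : ZMod (2 * n))) e)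
  | .central c b => .central (c + (n : ZMod (2 * n))) b

/-- A triangulation of the punctured `2n`-gon: a maximal set of pairwise non-crossing chords. -/
def DTriangulation (n : ℕ) (T : Finset (DChord n)) : Prop :=
  (∀ e ∈ T, DChord.IsValid n e) ∧
  (∀ e ∈ T, ∀ f ∈ T, ¬ DChord.Cross n e f) ∧
  (∀ e, DChord.IsValid n e → e ∉ T → ∃ f ∈ T, DChord.Cross n e f)

/-- A centrally symmetric triangulation of the punctured `2n`-gon: one invariant under
180-degree rotation. -/
def DCSTriangulation (n : ℕ) (T : Finset (DChord n)) : Prop :=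
  DTriangulation n T ∧ ∀ e ∈ T, DChord.rot n e ∈ T


namespace PartA

def Cross (e f : ℕ × ℕ) : Prop :=
  (e.1 < f.1 ∧ f.1 < e.2 ∧ e.2 < f.2) ∨ (f.1 < e.1 ∧ e.1 < f.2 ∧ f.2 < e.2)

def IsDiag (l r : ℕ) (e : ℕ × ℕ) : Prop :=
  l ≤ e.1 ∧ e.1 + 2 ≤ e.2 ∧ e.2 ≤ r ∧ ¬(e.1 = l ∧ e.2 = r)

def MaxNC (l r : ℕ) (D : Finset (ℕ × ℕ)) : Prop :=
  (∀ e ∈ D, IsDiag l r e) ∧ (∀ e ∈ D, ∀ f ∈ D, ¬ Cross e f) ∧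
  (∀ e, IsDiag l r e → e ∉ D → ∃ f ∈ D, Cross f e)

def IsApex (l r : ℕ) (D : Finset (ℕ × ℕ)) (k : ℕ) : Prop :=
  l < k ∧ k < r ∧ (l + 2 ≤ k → (l, k) ∈ D) ∧ (k + 2 ≤ r → (k, r) ∈ D)

def glue (l k r : ℕ) (T1 T2 : Finset (ℕ × ℕ)) : Finset (ℕ × ℕ) :=
  T1 ∪ T2 ∪ (if l + 2 ≤ k then {(l, k)} else ∅) ∪ (if k + 2 ≤ r then {(k, r)} else ∅)

theorem mem_glue {l k r : ℕ} {T1 T2 : Finset (ℕ × ℕ)} {x : ℕ × ℕ} :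
    x ∈ glue l k r T1 T2 ↔ x ∈ T1 ∨ x ∈ T2 ∨ (l + 2 ≤ k ∧ x = (l, k)) ∨ (k + 2 ≤ r ∧ x = (k, r)) := by
  unfold glue
  simp only [Finset.mem_union]
  constructor
  · rintro (((h | h) | h) | h)
    · exact Or.inl h
    · exact Or.inr (Or.inl h)
    · split_ifs at h with hc
      · simp at h; exact Or.inr (Or.inr (Or.inl ⟨hc, h⟩))
      · simp at h
    · split_ifs at h with hc
      · simp at h; exact Or.inr (Or.inr (Or.inr ⟨hc, h⟩))
      · simp at h
  · rintro (h | h | ⟨hc, rfl⟩ | ⟨hc, rfl⟩)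
    · exact Or.inl (Or.inl (Or.inl h))
    · exact Or.inl (Or.inl (Or.inr h))
    · left; right; simp [hc]
    · right; simp [hc]

theorem glue_max {l k r : ℕ} {T1 T2 : Finset (ℕ × ℕ)} (hlk : l < k) (hkr : k < r)
    (h1 : MaxNC l k T1) (h2 : MaxNC k r T2) : MaxNC l r (glue l k r T1 T2) := by
  obtain ⟨h1d, h1n, h1m⟩ := h1
  obtain ⟨h2d, h2n, h2m⟩ := h2
  have hd : ∀ e ∈ glue l k r T1 T2, IsDiag l r e := by
    intro e he
    rcases mem_glue.1 he with h | h | ⟨hc, rfl⟩ | ⟨hc, rfl⟩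
    · have := h1d _ h; unfold IsDiag at *; omega
    · have := h2d _ h; unfold IsDiag at *; omega
    · unfold IsDiag; simp; omega
    · unfold IsDiag; simp; omega
  refine ⟨hd, ?_, ?_⟩
  · intro e he f hf
    rcases mem_glue.1 he with he' | he' | ⟨hc, rfl⟩ | ⟨hc, rfl⟩ <;>
      rcases mem_glue.1 hf with hf' | hf' | ⟨hc', hf2⟩ | ⟨hc', hf2⟩
    · exact h1n _ he' _ hf'
    · have a1 := h1d _ he'; have a2 := h2d _ hf'
      unfold IsDiag at a1 a2; unfold Cross; omega
    · have a1 := h1d _ he'; subst hf2; unfold IsDiag at a1; unfold Cross; simp; omega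
    · have a1 := h1d _ he'; subst hf2; unfold IsDiag at a1; unfold Cross; simp; omega
    · have a1 := h2d _ he'; have a2 := h1d _ hf'
      unfold IsDiag at a1 a2; unfold Cross; omega
    · exact h2n _ he' _ hf'
    · have a1 := h2d _ he'; subst hf2; unfold IsDiag at a1; unfold Cross; simp; omega
    · have a1 := h2d _ he'; subst hf2; unfold IsDiag at a1; unfold Cross; simp; omega
    · have a1 := h1d _ hf'; unfold IsDiag at a1; unfold Cross; simp; omega
    · have a1 := h2d _ hf'; unfold IsDiag at a1; unfold Cross; simp; omega
    · subst hf2; unfold Cross; simp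
    · subst hf2; unfold Cross; simp; omega
    · have a1 := h1d _ hf'; unfold IsDiag at a1; unfold Cross; simp; omega
    · have a1 := h2d _ hf'; unfold IsDiag at a1; unfold Cross; simp; omega
    · subst hf2; unfold Cross; simp; omega
    · subst hf2; unfold Cross; simp
  · intro e hed hen
    have he1 : e.1 < e.2 ∧ l ≤ e.1 ∧ e.2 ≤ r := by unfold IsDiag at hed; omega
    rcases (show e.2 ≤ k ∨ k ≤ e.1 ∨ (e.1 < k ∧ k < e.2) by omega) with hc | hc | hc
    · -- inside [l,k]
      by_cases helk : e = (l, k)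
      · exfalso; apply hen; rw [mem_glue]; right; right; left
        refine ⟨?_, helk⟩
        unfold IsDiag at hed; omega
      · have : IsDiag l k e := by
          unfold IsDiag at *
          refine ⟨hed.1, hed.2.1, hc, ?_⟩
          intro ⟨u, v⟩; exact helk (Prod.ext u v)
        have hne : e ∉ T1 := fun h => hen (mem_glue.2 (Or.inl h))
        obtain ⟨f, hf, hcf⟩ := h1m _ this hne
        exact ⟨f, mem_glue.2 (Or.inl hf), hcf⟩
    · by_cases helk : e = (k, r)
      · exfalso; apply hen; rw [mem_glue]; right; right; right
        refine ⟨?_, helk⟩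
        unfold IsDiag at hed; omega
      · have : IsDiag k r e := by
          unfold IsDiag at *
          refine ⟨hc, hed.2.1, hed.2.2.1, ?_⟩
          intro ⟨u, v⟩; exact helk (Prod.ext u v)
        have hne : e ∉ T2 := fun h => hen (mem_glue.2 (Or.inr (Or.inl h)))
        obtain ⟨f, hf, hcf⟩ := h2m _ this hne
        exact ⟨f, mem_glue.2 (Or.inr (Or.inl hf)), hcf⟩
    · -- straddles k
      by_cases hel : e.1 = l
      · have hcr : k + 2 ≤ r := by unfold IsDiag at hed; omega
        refine ⟨(k, r), mem_glue.2 (Or.inr (Or.inr (Or.inr ⟨hcr, rfl⟩))), ?_⟩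
        unfold IsDiag at hed; unfold Cross; simp; omega
      · have hcl : l + 2 ≤ k := by unfold IsDiag at hed; omega
        refine ⟨(l, k), mem_glue.2 (Or.inr (Or.inr (Or.inl ⟨hcl, rfl⟩))), ?_⟩
        unfold IsDiag at hed; unfold Cross; simp; omega

theorem glue_apex {l k r : ℕ} {T1 T2 : Finset (ℕ × ℕ)} (hlk : l < k) (hkr : k < r) :
    IsApex l r (glue l k r T1 T2) k := by
  refine ⟨hlk, hkr, ?_, ?_⟩
  · intro h; exact mem_glue.2 (Or.inr (Or.inr (Or.inl ⟨h, rfl⟩)))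
  · intro h; exact mem_glue.2 (Or.inr (Or.inr (Or.inr ⟨h, rfl⟩)))

theorem glue_filter_left {l k r : ℕ} {T1 T2 : Finset (ℕ × ℕ)} (hlk : l < k) (hkr : k < r)
    (h1 : ∀ e ∈ T1, IsDiag l k e) (h2 : ∀ e ∈ T2, IsDiag k r e) :
    (glue l k r T1 T2).filter (fun e => e.2 ≤ k ∧ e ≠ (l, k)) = T1 := by
  ext x
  simp only [Finset.mem_filter, mem_glue]
  constructor
  · rintro ⟨h | h | ⟨hc, rfl⟩ | ⟨hc, rfl⟩, hx2, hxne⟩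
    · exact h
    · have := h2 _ h; unfold IsDiag at this; omega
    · simp at hxne
    · omega
  · intro h
    have := h1 _ h
    unfold IsDiag at this
    refine ⟨Or.inl h, by omega, ?_⟩
    intro heq
    rw [heq] at this
    simp at this

theorem glue_filter_right {l k r : ℕ} {T1 T2 : Finset (ℕ × ℕ)} (hlk : l < k) (hkr : k < r)
    (h1 : ∀ e ∈ T1, IsDiag l k e) (h2 : ∀ e ∈ T2, IsDiag k r e) :
    (glue l k r T1 T2).filter (fun e => k ≤ e.1 ∧ e ≠ (k, r)) = T2 := by
  ext x
  simp only [Finset.mem_filter, mem_glue]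
  constructor
  · rintro ⟨h | h | ⟨hc, rfl⟩ | ⟨hc, rfl⟩, hx2, hxne⟩
    · have := h1 _ h; unfold IsDiag at this; omega
    · exact h
    · omega
    · simp at hxne
  · intro h
    have := h2 _ h
    unfold IsDiag at this
    refine ⟨Or.inr (Or.inl h), by omega, ?_⟩
    intro heq
    rw [heq] at this
    simp at this

theorem split_left {l r : ℕ} {D : Finset (ℕ × ℕ)} (h : MaxNC l r D) {k : ℕ}
    (ha : IsApex l r D k)
    (hstr : ∀ e ∈ D, e.2 ≤ k ∨ k ≤ e.1) :
    MaxNC l k (D.filter (fun e => e.2 ≤ k ∧ e ≠ (l, k))) := by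
  obtain ⟨hd, hn, hm⟩ := h
  refine ⟨?_, ?_, ?_⟩
  · intro e he
    obtain ⟨he, he2, hene⟩ := Finset.mem_filter.1 he
    have := hd _ he
    unfold IsDiag at *
    refine ⟨this.1, this.2.1, he2, ?_⟩
    intro ⟨u, v⟩; exact hene (Prod.ext u v)
  · intro e he f hf
    exact hn _ (Finset.mem_filter.1 he).1 _ (Finset.mem_filter.1 hf).1
  · intro e hed hen
    have hk1 := ha.1
    have hk2 := ha.2.1
    have hed' : IsDiag l r e := by
      unfold IsDiag at *; omega
    have henD : e ∉ D := by
      intro hmem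
      apply hen
      refine Finset.mem_filter.2 ⟨hmem, ?_, ?_⟩
      · unfold IsDiag at hed; omega
      · intro heq; unfold IsDiag at hed; rw [heq] at hed; simp at hed
    obtain ⟨f, hf, hcf⟩ := hm _ hed' henD
    have hfs := hstr _ hf
    have hfd := hd _ hf
    refine ⟨f, Finset.mem_filter.2 ⟨hf, ?_, ?_⟩, hcf⟩
    · unfold Cross at hcf; unfold IsDiag at hed hfd; omega
    · intro heq
      subst heq
      unfold Cross at hcf; unfold IsDiag at hed hfd; simp at hcf; omega

theorem split_right {l r : ℕ} {D : Finset (ℕ × ℕ)} (h : MaxNC l r D) {k : ℕ}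
    (ha : IsApex l r D k)
    (hstr : ∀ e ∈ D, e.2 ≤ k ∨ k ≤ e.1) :
    MaxNC k r (D.filter (fun e => k ≤ e.1 ∧ e ≠ (k, r))) := by
  obtain ⟨hd, hn, hm⟩ := h
  refine ⟨?_, ?_, ?_⟩
  · intro e he
    obtain ⟨he, he2, hene⟩ := Finset.mem_filter.1 he
    have := hd _ he
    unfold IsDiag at *
    refine ⟨he2, this.2.1, this.2.2.1, ?_⟩
    intro ⟨u, v⟩; exact hene (Prod.ext u v)
  · intro e he f hf
    exact hn _ (Finset.mem_filter.1 he).1 _ (Finset.mem_filter.1 hf).1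
  · intro e hed hen
    have hk1 := ha.1
    have hk2 := ha.2.1
    have hed' : IsDiag l r e := by
      unfold IsDiag at *; omega
    have henD : e ∉ D := by
      intro hmem
      apply hen
      refine Finset.mem_filter.2 ⟨hmem, ?_, ?_⟩
      · unfold IsDiag at hed; omega
      · intro heq; unfold IsDiag at hed; rw [heq] at hed; simp at hed
    obtain ⟨f, hf, hcf⟩ := hm _ hed' henD
    have hfs := hstr _ hf
    have hfd := hd _ hf
    refine ⟨f, Finset.mem_filter.2 ⟨hf, ?_, ?_⟩, hcf⟩
    · unfold Cross at hcf; unfold IsDiag at hed hfd; omega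
    · intro heq
      subst heq
      unfold Cross at hcf; unfold IsDiag at hed hfd; simp at hcf; omega

theorem glue_eq {l r : ℕ} {D : Finset (ℕ × ℕ)} (h : MaxNC l r D) {k : ℕ}
    (ha : IsApex l r D k)
    (hstr : ∀ e ∈ D, e.2 ≤ k ∨ k ≤ e.1) :
    D = glue l k r (D.filter (fun e => e.2 ≤ k ∧ e ≠ (l, k)))
      (D.filter (fun e => k ≤ e.1 ∧ e ≠ (k, r))) := by
  ext x
  rw [mem_glue]
  simp only [Finset.mem_filter]
  constructor
  · intro hx
    have hxd := h.1 _ hx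
    have hxs := hstr _ hx
    unfold IsDiag at hxd
    by_cases h1 : x = (l, k)
    · right; right; left; exact ⟨by subst h1; omega, h1⟩
    · by_cases h2 : x = (k, r)
      · right; right; right; exact ⟨by subst h2; omega, h2⟩
      · rcases hxs with hc | hc
        · exact Or.inl ⟨hx, hc, h1⟩
        · exact Or.inr (Or.inl ⟨hx, hc, h2⟩)
  · rintro (⟨hx, _⟩ | ⟨hx, _⟩ | ⟨hc, rfl⟩ | ⟨hc, rfl⟩)
    · exact hx
    · exact hx
    · exact ha.2.2.1 hc
    · exact ha.2.2.2 hc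


theorem apex_exists {l r : ℕ} {D : Finset (ℕ × ℕ)} (h : MaxNC l r D) (h2 : l + 2 ≤ r) :
    ∃ k, IsApex l r D k := by
  classical
  set S : Finset ℕ := insert (l+1) ((D.filter (fun e => e.1 = l)).image Prod.snd) with hS
  have hne : S.Nonempty := ⟨l+1, Finset.mem_insert_self _ _⟩
  set k := S.max' hne with hk
  have hkS : k ∈ S := S.max'_mem hne
  have hkub : ∀ x ∈ S, x ≤ k := fun x hx => S.le_max' x hx
  have hmem : k = l + 1 ∨ (l, k) ∈ D := by
    rcases Finset.mem_insert.1 hkS with h' | h'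
    · exact Or.inl h'
    · right
      obtain ⟨e, he, he2⟩ := Finset.mem_image.1 h'
      obtain ⟨he', he1⟩ := Finset.mem_filter.1 he
      have : e = (l, k) := Prod.ext he1 he2
      rwa [this] at he'
  have hlk : l < k := by
    rcases hmem with h' | h'
    · omega
    · have := (h.1 _ h').2.1; simp at this; omega
  have hkr : k < r := by
    rcases hmem with h' | h'
    · omega
    · have := h.1 _ h'; unfold IsDiag at this; simp at this; omega
  have hconn1 : l + 2 ≤ k → (l, k) ∈ D := by
    intro hlk2
    rcases hmem with h' | h'
    · omega
    · exact h'
  refine ⟨k, hlk, hkr, hconn1, ?_⟩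
  intro hk2
  by_contra hnotin
  have hdiag : IsDiag l r (k, r) := by
    unfold IsDiag; simp; omega
  obtain ⟨f, hf, hcross⟩ := h.2.2 _ hdiag hnotin
  have hfd := h.1 _ hf
  unfold IsDiag at hfd
  unfold Cross at hcross
  simp at hcross
  -- second disjunct impossible since f.2 ≤ r
  have hc1 : f.1 < k ∧ k < f.2 ∧ f.2 < r := by omega
  by_cases hfl : f.1 = l
  · -- f = (l, f.2) with f.2 > k : contradicts maximality of k
    have : f.2 ∈ S := by
      refine Finset.mem_insert_of_mem (Finset.mem_image.2 ⟨f, ?_, rfl⟩)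
      exact Finset.mem_filter.2 ⟨hf, hfl⟩
    have := hkub _ this
    omega
  · -- f.1 > l, so (l,k) ∈ D and crosses f
    have hlk2 : l + 2 ≤ k := by omega
    have hlkD := hconn1 hlk2
    have := h.2.1 _ hlkD _ hf
    unfold Cross at this
    simp at this
    omega

theorem apex_unique {l r : ℕ} {D : Finset (ℕ × ℕ)} (h : MaxNC l r D) {k k' : ℕ}
    (h1 : IsApex l r D k) (h2 : IsApex l r D k') : k = k' := by
  have hk1 := h1.1
  have hk2 := h1.2.1
  have hk1' := h2.1
  have hk2' := h2.2.1
  by_contra hne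
  -- wlog k < k'
  rcases Nat.lt_or_ge k k' with hlt | hge
  · have hkr : (k, r) ∈ D := h1.2.2.2 (by omega)
    have hlk' : (l, k') ∈ D := h2.2.2.1 (by omega)
    have := h.2.1 _ hlk' _ hkr
    unfold Cross at this; simp at this
    omega
  · have hlt : k' < k := by omega
    have hkr : (k', r) ∈ D := h2.2.2.2 (by omega)
    have hlk : (l, k) ∈ D := h1.2.2.1 (by omega)
    clear h1 h2
    have := h.2.1 _ hlk _ hkr
    unfold Cross at this; simp at this
    omega

theorem no_straddle {l r : ℕ} {D : Finset (ℕ × ℕ)} (h : MaxNC l r D) {k : ℕ}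
    (ha : IsApex l r D k) : ∀ e ∈ D, e.2 ≤ k ∨ k ≤ e.1 := by
  intro e he
  by_contra hcon
  push_neg at hcon
  have hstr : e.1 < k ∧ k < e.2 := by omega
  have hed := h.1 _ he
  unfold IsDiag at hed
  by_cases hel : e.1 = l
  · have hkr : (k, r) ∈ D := ha.2.2.2 (by omega)
    have := h.2.1 _ hkr _ he
    unfold Cross at this; simp at this
    omega
  · have hlk : (l, k) ∈ D := ha.2.2.1 (by omega)
    have := h.2.1 _ hlk _ he
    unfold Cross at this; simp at this
    omega


theorem catalan_pos' : ∀ n : ℕ, 0 < catalan n := by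
  intro n
  induction n using Nat.strong_induction_on with
  | _ n ih =>
    cases n with
    | zero => simp [catalan_zero]
    | succ m =>
      rw [catalan_succ]
      apply Finset.sum_pos'
      · intro i _; exact Nat.zero_le _
      · refine ⟨⟨0, Nat.succ_pos m⟩, Finset.mem_univ _, ?_⟩
        show 0 < catalan 0 * catalan (m - 0)
        simp only [catalan_zero, one_mul, Nat.sub_zero]
        exact ih m (Nat.lt_succ_self m)

theorem maxnc_base {l : ℕ} {D : Finset (ℕ × ℕ)} : MaxNC l (l + 1) D ↔ D = ∅ := by
  constructor
  · intro h
    by_contra hne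
    obtain ⟨e, he⟩ := Finset.nonempty_iff_ne_empty.2 hne
    have := h.1 _ he
    unfold IsDiag at this
    omega
  · rintro rfl
    refine ⟨by simp, by simp, ?_⟩
    intro e hed _
    unfold IsDiag at hed
    omega

theorem cardA : ∀ d : ℕ, ∀ l r : ℕ, l < r → r - l = d →
    Nat.card {D : Finset (ℕ × ℕ) // MaxNC l r D} = catalan (r - l - 1) := by
  intro d
  induction d using Nat.strong_induction_on with
  | _ d ih =>
    intro l r hlr hd
    rcases Nat.lt_or_ge d 2 with hd2 | hd2
    · -- d = 1
      have hr : r = l + 1 := by omega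
      subst hr
      have : ∀ D : Finset (ℕ × ℕ), MaxNC l (l + 1) D ↔ D = ∅ := fun D => maxnc_base
      have hu : Nonempty {D : Finset (ℕ × ℕ) // MaxNC l (l+1) D} := ⟨⟨∅, maxnc_base.2 rfl⟩⟩
      have hs : Subsingleton {D : Finset (ℕ × ℕ) // MaxNC l (l+1) D} := by
        constructor
        rintro ⟨D, hD⟩ ⟨D', hD'⟩
        have h1 := maxnc_base.1 hD
        have h2 := maxnc_base.1 hD'
        subst h1; subst h2; rfl
      rw [Nat.card_eq_one_iff_unique.2 ⟨hs, hu⟩]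
      simp only [show l + 1 - l - 1 = 0 by omega, catalan_zero]
    · -- d ≥ 2
      have hlr2 : l + 2 ≤ r := by omega
      -- the equivalence
      set F : (Σ k : {k // k ∈ Finset.Ioo l r},
          {T1 : Finset (ℕ × ℕ) // MaxNC l k.1 T1} × {T2 : Finset (ℕ × ℕ) // MaxNC k.1 r T2}) →
          {D : Finset (ℕ × ℕ) // MaxNC l r D} :=
        fun x => ⟨glue l x.1.1 r x.2.1.1 x.2.2.1,
          glue_max (Finset.mem_Ioo.1 x.1.2).1 (Finset.mem_Ioo.1 x.1.2).2 x.2.1.2 x.2.2.2⟩ with hF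
      have hbij : Function.Bijective F := by
        constructor
        · rintro ⟨⟨k, hk⟩, ⟨T1, h1⟩, ⟨T2, h2⟩⟩ ⟨⟨k', hk'⟩, ⟨T1', h1'⟩, ⟨T2', h2'⟩⟩ heq
          simp only [hF, Subtype.mk.injEq] at heq
          obtain ⟨hk1, hk2⟩ := Finset.mem_Ioo.1 hk
          obtain ⟨hk1', hk2'⟩ := Finset.mem_Ioo.1 hk'
          have hmax : MaxNC l r (glue l k r T1 T2) := glue_max hk1 hk2 h1 h2
          have ha1 : IsApex l r (glue l k r T1 T2) k := glue_apex hk1 hk2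
          have ha2 : IsApex l r (glue l k r T1 T2) k' := by
            rw [heq]; exact glue_apex hk1' hk2'
          have hkk : k = k' := apex_unique hmax ha1 ha2
          subst hkk
          have e1 : T1 = T1' := by
            rw [← glue_filter_left hk1 hk2 h1.1 h2.1, ← glue_filter_left hk1' hk2' h1'.1 h2'.1, heq]
          have e2 : T2 = T2' := by
            rw [← glue_filter_right hk1 hk2 h1.1 h2.1, ← glue_filter_right hk1' hk2' h1'.1 h2'.1, heq]
          subst e1; subst e2
          rfl
        · rintro ⟨D, hD⟩
          obtain ⟨k, hka⟩ := apex_exists hD hlr2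
          have hstr := no_straddle hD hka
          refine ⟨⟨⟨k, Finset.mem_Ioo.2 ⟨hka.1, hka.2.1⟩⟩,
            ⟨_, split_left hD hka hstr⟩, ⟨_, split_right hD hka hstr⟩⟩, ?_⟩
          simp only [hF, Subtype.mk.injEq]
          exact (glue_eq hD hka hstr).symm
      -- cardinalities
      have hcards : ∀ k, l < k → k < r →
          Nat.card {T1 : Finset (ℕ × ℕ) // MaxNC l k T1} = catalan (k - l - 1) ∧
          Nat.card {T2 : Finset (ℕ × ℕ) // MaxNC k r T2} = catalan (r - k - 1) := by
        intro k h1 h2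
        exact ⟨ih (k - l) (by omega) l k h1 rfl, ih (r - k) (by omega) k r h2 rfl⟩
      have hfin : ∀ k, l < k → k < r →
          Finite {T1 : Finset (ℕ × ℕ) // MaxNC l k T1} ∧
          Finite {T2 : Finset (ℕ × ℕ) // MaxNC k r T2} := by
        intro k h1 h2
        obtain ⟨c1, c2⟩ := hcards k h1 h2
        constructor
        · by_contra hinf
          rw [not_finite_iff_infinite] at hinf
          rw [Nat.card_eq_zero_of_infinite] at c1
          have := catalan_pos' (k - l - 1)
          omega
        · by_contra hinf
          rw [not_finite_iff_infinite] at hinf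
          rw [Nat.card_eq_zero_of_infinite] at c2
          have := catalan_pos' (r - k - 1)
          omega
      haveI : ∀ k : {k // k ∈ Finset.Ioo l r},
          Finite ({T1 : Finset (ℕ × ℕ) // MaxNC l k.1 T1} × {T2 : Finset (ℕ × ℕ) // MaxNC k.1 r T2}) := by
        intro k
        obtain ⟨hk1, hk2⟩ := Finset.mem_Ioo.1 k.2
        obtain ⟨f1, f2⟩ := hfin k.1 hk1 hk2
        haveI := f1; haveI := f2; infer_instance
      have hcard := Nat.card_eq_of_bijective F hbij
      haveI fI : ∀ k : {k // k ∈ Finset.Ioo l r},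
          Fintype ({T1 : Finset (ℕ × ℕ) // MaxNC l k.1 T1} × {T2 : Finset (ℕ × ℕ) // MaxNC k.1 r T2}) :=
        fun k => Fintype.ofFinite _
      rw [← hcard]
      rw [Nat.card_eq_fintype_card, Fintype.card_sigma]
      have hterm : ∀ k : {k // k ∈ Finset.Ioo l r},
          Fintype.card ({T1 : Finset (ℕ × ℕ) // MaxNC l k.1 T1} × {T2 : Finset (ℕ × ℕ) // MaxNC k.1 r T2})
          = catalan (k.1 - l - 1) * catalan (r - k.1 - 1) := by
        intro k
        obtain ⟨hk1, hk2⟩ := Finset.mem_Ioo.1 k.2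
        obtain ⟨c1, c2⟩ := hcards k.1 hk1 hk2
        rw [← Nat.card_eq_fintype_card, Nat.card_prod, c1, c2]
      rw [Finset.sum_congr rfl (fun k _ => hterm k)]
      rw [Finset.sum_coe_sort (Finset.Ioo l r) (fun k => catalan (k - l - 1) * catalan (r - k - 1))]
      -- now reindex and use catalan_succ'
      have hre : ∑ k ∈ Finset.Ioo l r, catalan (k - l - 1) * catalan (r - k - 1)
          = ∑ i ∈ Finset.range (r - l - 1), catalan i * catalan (r - l - 2 - i) := by
        apply Finset.sum_nbij' (fun k => k - l - 1) (fun i => l + 1 + i)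
        · intro k hk; simp only [Finset.mem_Ioo] at hk; simp only [Finset.mem_range]; omega
        · intro i hi; simp only [Finset.mem_range] at hi; simp only [Finset.mem_Ioo]; omega
        · intro k hk; simp only [Finset.mem_Ioo] at hk; omega
        · intro i hi; simp only [Finset.mem_range] at hi; omega
        · intro k hk
          simp only [Finset.mem_Ioo] at hk
          congr 2 <;> omega
      rw [hre]
      have : r - l - 1 = (r - l - 2) + 1 := by omega
      rw [this, catalan_succ, ← Fin.sum_univ_eq_sum_range
        (fun i => catalan i * catalan (r - l - 2 - i)) (r - l - 2).succ]

end PartA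

namespace PartB

def cyc (x y c : ℕ) : Prop := (x < c ∧ c < y) ∨ (y < x ∧ x < c) ∨ (c < y ∧ y < x)

theorem mod2 {x m : ℕ} (h : x < 2 * m) (hm : 0 < m) : x % m = if x < m then x else x - m := by
  split_ifs with h'
  · exact Nat.mod_eq_of_lt h'
  · rw [Nat.mod_eq_sub_mod (by omega), Nat.mod_eq_of_lt (by omega)]

variable {n : ℕ} (a : ZMod (2 * n))

theorem L_vs (i j : ℕ) (hi : i ≤ 2 * n) (hj : j ≤ 2 * n) :
    ((i : ZMod (2 * n)) - j).val = (i + 2 * n - j) % (2 * n) := by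
  have h1 : ((i : ZMod (2 * n)) - j) = ((i + 2 * n - j : ℕ) : ZMod (2 * n)) := by
    rw [Nat.cast_sub (by omega), Nat.cast_add, ZMod.natCast_self, add_zero]
  rw [h1, ZMod.val_natCast]

theorem L_arc (hn : 2 ≤ n) (x y c : ℕ) (hx : x < 2 * n) (hy : y < 2 * n) (hc : c < 2 * n) :
    arcMem (2 * n) (a + x) (a + y) (a + c) ↔ cyc x y c := by
  have hn0 : 0 < n := by omega
  unfold arcMem
  have e1 : a + (c : ZMod (2 * n)) - (a + x) = (c : ZMod (2 * n)) - x := by ring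
  have e2 : a + (y : ZMod (2 * n)) - (a + x) = (y : ZMod (2 * n)) - x := by ring
  rw [e1, e2, L_vs c x (by omega) (by omega), L_vs y x (by omega) (by omega),
    mod2 (by omega) (by omega), mod2 (by omega) (by omega)]
  unfold cyc
  split_ifs <;> omega

theorem cp_swap1 {m : ℕ} (x y c d : ZMod m) :
    crossPairs m x y c d ↔ crossPairs m y x c d := by unfold crossPairs; tauto

theorem cp_swap2 {m : ℕ} (x y c d : ZMod m) :
    crossPairs m x y c d ↔ crossPairs m x y d c := by unfold crossPairs; tauto

theorem L_crosses_cp {m : ℕ} (x y c d : ZMod m) :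
    Crosses m s(x, y) s(c, d) ↔ crossPairs m x y c d := by
  constructor
  · rintro ⟨p, q, u, v, he, hf, hcp⟩
    rw [Sym2.eq_iff] at he hf
    rcases he with ⟨rfl, rfl⟩ | ⟨rfl, rfl⟩ <;> rcases hf with ⟨rfl, rfl⟩ | ⟨rfl, rfl⟩
    · exact hcp
    · rw [cp_swap2]; exact hcp
    · rw [cp_swap1]; exact hcp
    · rw [cp_swap1, cp_swap2]; exact hcp
  · intro h; exact ⟨x, y, c, d, rfl, rfl, h⟩

theorem L_crosses (hn : 2 ≤ n) (x y c d : ℕ) (hx : x < 2 * n) (hy : y < 2 * n) (hc : c < 2 * n)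
    (hd : d < 2 * n) :
    Crosses (2 * n) s(a + x, a + y) s(a + c, a + d) ↔
      (cyc x y c ∧ cyc y x d) ∨ (cyc x y d ∧ cyc y x c) := by
  rw [L_crosses_cp]
  unfold crossPairs
  rw [L_arc a hn x y c hx hy hc, L_arc a hn x y d hx hy hd, L_arc a hn y x d hy hx hd,
    L_arc a hn y x c hy hx hc]

theorem L_dcc (hn : 2 ≤ n) (x y c : ℕ) (hx : x < 2 * n) (hy : y < 2 * n) (hc : c < 2 * n) :
    diagCrossCentral n s(a + x, a + y) (a + c) ↔
      ((if x ≤ y then y - x else y + 2 * n - x) < n ∧ cyc x y c) ∨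
      ((if y ≤ x then x - y else x + 2 * n - y) < n ∧ cyc y x c) := by
  have hxy : (a + (y : ZMod (2*n)) - (a + x)).val = (y + 2 * n - x) % (2 * n) := by
    have e : a + (y : ZMod (2*n)) - (a + x) = (y : ZMod (2*n)) - x := by ring
    rw [e, L_vs y x (by omega) (by omega)]
  have hyx : (a + (x : ZMod (2*n)) - (a + y)).val = (x + 2 * n - y) % (2 * n) := by
    have e : a + (x : ZMod (2*n)) - (a + y) = (x : ZMod (2*n)) - y := by ring
    rw [e, L_vs x y (by omega) (by omega)]
  constructor
  · rintro ⟨p, q, hpq, hlen, harc⟩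
    rw [Sym2.eq_iff] at hpq
    rcases hpq with ⟨h1, h2⟩ | ⟨h1, h2⟩
    · subst h1; subst h2
      rw [hxy, mod2 (by omega) (by omega)] at hlen
      rw [L_arc a hn x y c hx hy hc] at harc
      left
      refine ⟨?_, harc⟩
      split_ifs at hlen ⊢ <;> omega
    · subst h1; subst h2
      rw [hyx, mod2 (by omega) (by omega)] at hlen
      rw [L_arc a hn y x c hy hx hc] at harc
      right
      refine ⟨?_, harc⟩
      split_ifs at hlen ⊢ <;> omega
  · rintro (⟨hlen, harc⟩ | ⟨hlen, harc⟩)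
    · refine ⟨a + x, a + y, rfl, ?_, ?_⟩
      · rw [hxy, mod2 (by omega) (by omega)]
        split_ifs at hlen ⊢ <;> omega
      · rw [L_arc a hn x y c hx hy hc]; exact harc
    · refine ⟨a + y, a + x, Sym2.eq_swap, ?_, ?_⟩
      · rw [hyx, mod2 (by omega) (by omega)]
        split_ifs at hlen ⊢ <;> omega
      · rw [L_arc a hn y x c hy hx hc]; exact harc

theorem L_cast_inj (u v : ℕ) (hu : u < 2 * n) (hv : v < 2 * n) :
    ((u : ZMod (2 * n)) = v) ↔ u = v := by
  constructor
  · intro h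
    have := congrArg ZMod.val h
    rwa [ZMod.val_natCast_of_lt hu, ZMod.val_natCast_of_lt hv] at this
  · rintro rfl; rfl

theorem L_point (hn : 2 ≤ n) (z : ZMod (2 * n)) : ∃ u, u < 2 * n ∧ z = a + u := by
  haveI : NeZero (2 * n) := ⟨by omega⟩
  refine ⟨(z - a).val, ZMod.val_lt _, ?_⟩
  rw [ZMod.natCast_val, ZMod.cast_id]
  ring

theorem L_nn0 : ((n : ZMod (2 * n)) + n) = 0 := by
  rw [← Nat.cast_add, show n + n = 2 * n by ring, ZMod.natCast_self]

theorem L_shift {m : ℕ} (x y c d t : ZMod m) :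
    crossPairs m (x + t) (y + t) (c + t) (d + t) ↔ crossPairs m x y c d := by
  simp [crossPairs, arcMem, add_sub_add_right_eq_sub]

theorem L_crosses_shift {m : ℕ} (e f : Sym2 (ZMod m)) (t : ZMod m) :
    Crosses m (Sym2.map (· + t) e) (Sym2.map (· + t) f) ↔ Crosses m e f := by
  induction e using Sym2.inductionOn with
  | hf x y =>
    induction f using Sym2.inductionOn with
    | hf c d =>
      rw [Sym2.map_pair_eq, Sym2.map_pair_eq]
      simp only [L_crosses_cp]
      exact L_shift x y c d t

theorem mod2' {x m : ℕ} (h : x < 2 * m) (hm : 0 < m) :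
    x % m = x ∨ (m ≤ x ∧ x % m = x - m) := by
  rw [mod2 h hm]
  split_ifs with h' <;> [exact Or.inl rfl; exact Or.inr ⟨by omega, rfl⟩]

theorem nemod (hn : 2 ≤ n) {v w : ℕ} (hw : w < 4 * n) (h : v ≠ w % (2 * n)) :
    (w < 2 * n → v ≠ w) ∧ (2 * n ≤ w → v ≠ w - (2 * n)) := by
  rw [mod2 (by omega) (by omega)] at h
  split_ifs at h <;> constructor <;> intro h' <;> first | exact h | omega

theorem L_eq_mod (hn : 2 ≤ n) (v w : ℕ) (hv : v < 2 * n) :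
    (a + (v : ZMod (2 * n)) = a + (w : ZMod (2 * n))) ↔ v = w % (2 * n) := by
  rw [add_right_inj, ← ZMod.natCast_mod w (2 * n)]
  exact L_cast_inj v (w % (2 * n)) hv (Nat.mod_lt _ (by omega))

theorem L_dcc0 (hn : 2 ≤ n) (x y : ℕ) (hx : x < 2 * n) (hy : y < 2 * n) :
    diagCrossCentral n s(a + x, a + y) a ↔
      ((if x ≤ y then y - x else y + 2 * n - x) < n ∧ cyc x y 0) ∨
      ((if y ≤ x then x - y else x + 2 * n - y) < n ∧ cyc y x 0) := by
  have := L_dcc a hn x y 0 hx hy (by omega)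
  simpa using this

theorem aux_half (hn : 2 ≤ n) (p0 q0 : ℕ) (hp0 : p0 < 2 * n) (hq0 : q0 < 2 * n)
    (hne : p0 ≠ q0)
    (hadj1 : p0 + 1 < 2 * n → q0 ≠ p0 + 1) (hadj2 : p0 + 1 = 2 * n → q0 ≠ 0)
    (hlen : (if p0 ≤ q0 then q0 - p0 else q0 + 2 * n - p0) < n)
    (hnc0 : ¬ cyc p0 q0 0) (hncn : ¬ cyc p0 q0 n) :
    ∃ p q : ℕ, p < q ∧ q ≤ n ∧ p + 2 ≤ q ∧ q - p < n ∧
      ((p0 = p ∧ q0 = q) ∨ (p0 = p + n ∧ q0 = (q + n) % (2 * n))) := by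
  unfold cyc at hnc0 hncn
  rcases Nat.lt_or_ge p0 q0 with h | h
  · rcases le_or_gt q0 n with h2 | h2
    · exact ⟨p0, q0, h, h2, by omega, by split_ifs at hlen <;> omega, Or.inl ⟨rfl, rfl⟩⟩
    · have hp0n : n ≤ p0 := by omega
      refine ⟨p0 - n, q0 - n, by omega, by omega, by omega, by split_ifs at hlen <;> omega, Or.inr ⟨by omega, ?_⟩⟩
      rw [show q0 - n + n = q0 by omega, Nat.mod_eq_of_lt hq0]
  · have hq00 : q0 = 0 := by omega
    have hp0big : n < p0 := by split_ifs at hlen <;> omega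
    refine ⟨p0 - n, n, by omega, le_refl n, by split_ifs at hlen <;> omega,
      by omega, Or.inr ⟨by omega, ?_⟩⟩
    rw [show n + n = 2 * n by ring, Nat.mod_self, hq00]

theorem half_decomp (hn : 2 ≤ n) (e : Sym2 (ZMod (2 * n))) (hval : DChord.IsValid n (.diag e))
    (h0 : ¬ diagCrossCentral n e a)
    (hn2 : ¬ diagCrossCentral n e (a + (n : ZMod (2 * n)))) :
    ∃ p q : ℕ, p < q ∧ q ≤ n ∧ p + 2 ≤ q ∧ q - p < n ∧
      (e = s(a + (p : ZMod (2 * n)), a + (q : ZMod (2 * n))) ∨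
       e = s(a + ((p + n : ℕ) : ZMod (2 * n)), a + (((q + n) % (2 * n) : ℕ) : ZMod (2 * n)))) := by
  obtain ⟨x, y, hexy, hne, hadj1, hadj2, hcent⟩ := hval
  obtain ⟨p0, hp0, hx⟩ := L_point a hn x
  obtain ⟨q0, hq0, hy⟩ := L_point a hn y
  subst hx; subst hy; subst hexy
  -- convert hypotheses to ℕ facts
  have hne' : p0 ≠ q0 := by
    intro h; exact hne (by rw [h])
  have hadj1' : q0 ≠ (p0 + 1) % (2 * n) := by
    intro h
    apply hadj1
    rw [(L_eq_mod a hn q0 (p0 + 1) hq0).2 h]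
    push_cast; ring
  have hadj2' : p0 ≠ (q0 + 1) % (2 * n) := by
    intro h
    apply hadj2
    rw [(L_eq_mod a hn p0 (q0 + 1) hp0).2 h]
    push_cast; ring
  have hcent' : q0 ≠ (p0 + n) % (2 * n) := by
    intro h
    apply hcent
    rw [(L_eq_mod a hn q0 (p0 + n) hq0).2 h]
    push_cast; ring
  obtain ⟨ha1A, ha1B⟩ := nemod hn (by omega) hadj1'
  obtain ⟨ha2A, ha2B⟩ := nemod hn (by omega) hadj2'
  obtain ⟨hcA, hcB⟩ := nemod hn (by omega) hcent'
  rw [L_dcc0 a hn p0 q0 hp0 hq0] at h0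
  rw [L_dcc a hn p0 q0 n hp0 hq0 (by omega)] at hn2
  push_neg at h0 hn2
  rcases Nat.lt_or_ge (if p0 ≤ q0 then q0 - p0 else q0 + 2 * n - p0) n with hc | hc
  · obtain ⟨p, q, h1, h2, h3, h4, h5⟩ := aux_half hn p0 q0 hp0 hq0 hne'
      (fun h' => by intro heq; exact ha1A (by omega) (by omega))
      (fun h' => by intro heq; exact ha1B (by omega) (by omega))
      hc (h0.1 hc) (hn2.1 hc)
    refine ⟨p, q, h1, h2, h3, h4, ?_⟩
    rcases h5 with ⟨e1, e2⟩ | ⟨e1, e2⟩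
    · left; rw [e1, e2]
    · right; rw [e1, e2]
  · have hc' : (if q0 ≤ p0 then p0 - q0 else p0 + 2 * n - q0) < n := by
      split_ifs at hc ⊢ <;> omega
    obtain ⟨p, q, h1, h2, h3, h4, h5⟩ := aux_half hn q0 p0 hq0 hp0 (Ne.symm hne')
      (fun h' => by intro heq; exact ha2A (by omega) (by omega))
      (fun h' => by intro heq; exact ha2B (by omega) (by omega))
      hc' (h0.2 hc') (hn2.2 hc')
    refine ⟨p, q, h1, h2, h3, h4, ?_⟩
    rcases h5 with ⟨e1, e2⟩ | ⟨e1, e2⟩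
    · left; rw [Sym2.eq_swap, e1, e2]
    · right; rw [Sym2.eq_swap, e1, e2]

def C4 : Finset (DChord n) :=
  {DChord.central a true, DChord.central a false,
   DChord.central (a + (n : ZMod (2 * n))) true, DChord.central (a + (n : ZMod (2 * n))) false}

def f1 (p : ℕ × ℕ) : DChord n := .diag s(a + (p.1 : ZMod (2 * n)), a + (p.2 : ZMod (2 * n)))

def f2 (p : ℕ × ℕ) : DChord n :=
  .diag s(a + (p.1 : ZMod (2 * n)) + (n : ZMod (2 * n)), a + (p.2 : ZMod (2 * n)) + (n : ZMod (2 * n)))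

def ED (D : Finset (ℕ × ℕ)) : Finset (DChord n) := C4 a ∪ D.image (f1 a) ∪ D.image (f2 a)

theorem mem_C4 {x : DChord n} : x ∈ C4 a ↔ x = .central a true ∨ x = .central a false ∨
    x = .central (a + (n : ZMod (2 * n))) true ∨ x = .central (a + (n : ZMod (2 * n))) false := by
  simp [C4]

theorem mem_ED {D : Finset (ℕ × ℕ)} {x : DChord n} :
    x ∈ ED a D ↔ x ∈ C4 a ∨ (∃ p ∈ D, f1 a p = x) ∨ (∃ p ∈ D, f2 a p = x) := by
  simp [ED, Finset.mem_union, Finset.mem_image]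

theorem f2_eq (p : ℕ × ℕ) :
    f2 a p = .diag s(a + ((p.1 + n : ℕ) : ZMod (2 * n)), a + (((p.2 + n) % (2 * n) : ℕ) : ZMod (2 * n))) := by
  unfold f2
  rw [ZMod.natCast_mod, Nat.cast_add, Nat.cast_add, ← add_assoc, ← add_assoc]

theorem f2_map (p : ℕ × ℕ) :
    (s(a + ((p.1 + n : ℕ) : ZMod (2 * n)), a + (((p.2 + n) % (2 * n) : ℕ) : ZMod (2 * n)))) =
      Sym2.map (· + (n : ZMod (2 * n))) s(a + (p.1 : ZMod (2 * n)), a + (p.2 : ZMod (2 * n))) := by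
  rw [Sym2.map_pair_eq, ZMod.natCast_mod, Nat.cast_add, Nat.cast_add, ← add_assoc, ← add_assoc]

theorem f2_pair (p : ℕ × ℕ) :
    (s(a + (p.1 : ZMod (2 * n)) + (n : ZMod (2 * n)), a + (p.2 : ZMod (2 * n)) + (n : ZMod (2 * n)))
      : Sym2 (ZMod (2 * n))) =
    s(a + ((p.1 + n : ℕ) : ZMod (2 * n)), a + (((p.2 + n) % (2 * n) : ℕ) : ZMod (2 * n))) := by
  rw [ZMod.natCast_mod, Nat.cast_add, Nat.cast_add, ← add_assoc, ← add_assoc]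

theorem rot_f1 (p : ℕ × ℕ) : DChord.rot n (f1 a p) = f2 a p := by
  simp [f1, f2, DChord.rot, Sym2.map_pair_eq]

theorem rot_f2 (p : ℕ × ℕ) : DChord.rot n (f2 a p) = f1 a p := by
  simp only [f1, f2, DChord.rot, Sym2.map_pair_eq]
  rw [add_assoc (a + (p.1 : ZMod (2*n))), L_nn0, add_zero, add_assoc (a + (p.2 : ZMod (2*n))), L_nn0, add_zero]

theorem valid_of (hn : 2 ≤ n) (u v : ℕ) (hu : u < 2 * n) (hv : v < 2 * n)
    (h1 : u ≠ v) (h2 : v ≠ (u + 1) % (2 * n)) (h3 : u ≠ (v + 1) % (2 * n))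
    (h4 : v ≠ (u + n) % (2 * n)) :
    DChord.IsValid n (DChord.diag s(a + (u : ZMod (2 * n)), a + (v : ZMod (2 * n)))) := by
  refine ⟨a + u, a + v, rfl, ?_, ?_, ?_, ?_⟩
  · intro h
    have := (L_eq_mod a hn u v hu).1 h
    rw [Nat.mod_eq_of_lt hv] at this
    exact h1 this
  · intro h
    rw [show a + (u : ZMod (2*n)) + 1 = a + ((u + 1 : ℕ) : ZMod (2*n)) by push_cast; ring] at h
    exact h2 ((L_eq_mod a hn v (u+1) hv).1 h)
  · intro h
    rw [show a + (v : ZMod (2*n)) + 1 = a + ((v + 1 : ℕ) : ZMod (2*n)) by push_cast; ring] at h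
    exact h3 ((L_eq_mod a hn u (v+1) hu).1 h)
  · intro h
    rw [show a + (u : ZMod (2*n)) + (n : ZMod (2*n)) = a + ((u + n : ℕ) : ZMod (2*n)) by push_cast; ring] at h
    exact h4 ((L_eq_mod a hn v (u+n) hv).1 h)

theorem valid_f1 (hn : 2 ≤ n) {i j : ℕ} (hij : i + 2 ≤ j) (hjn : j ≤ n)
    (h0n : ¬(i = 0 ∧ j = n)) :
    DChord.IsValid n (f1 a (i, j)) := by
  refine valid_of a hn i j ?_ ?_ ?_ ?_ ?_ ?_
  · omega
  · omega
  · omega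
  · rw [Nat.mod_eq_of_lt (by omega)]; omega
  · rw [Nat.mod_eq_of_lt (by omega)]; omega
  · rw [Nat.mod_eq_of_lt (by omega)]; omega

theorem valid_f2 (hn : 2 ≤ n) {i j : ℕ} (hij : i + 2 ≤ j) (hjn : j ≤ n)
    (h0n : ¬(i = 0 ∧ j = n)) : DChord.IsValid n (f2 a (i, j)) := by
  rw [f2_eq]
  rcases Nat.lt_or_ge j n with hj | hj
  · have hv : (j + n) % (2 * n) = j + n := Nat.mod_eq_of_lt (by omega)
    rw [hv]
    refine valid_of a hn (i+n) (j+n) ?_ ?_ ?_ ?_ ?_ ?_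
    · omega
    · omega
    · omega
    · rw [Nat.mod_eq_of_lt (by omega)]; omega
    · rcases Nat.lt_or_ge (j + n + 1) (2*n) with h | h
      · rw [Nat.mod_eq_of_lt h]; omega
      · rw [show j + n + 1 = 2 * n by omega, Nat.mod_self]; omega
    · rw [show i + n + n = i + 2 * n by ring, Nat.add_mod_right, Nat.mod_eq_of_lt (by omega)]
      omega
  · have hjn' : j = n := by omega
    have hv : (j + n) % (2 * n) = 0 := by rw [hjn', show n + n = 2*n by ring, Nat.mod_self]
    rw [hv]
    refine valid_of a hn (i+n) 0 ?_ ?_ ?_ ?_ ?_ ?_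
    · omega
    · omega
    · omega
    · rw [Nat.mod_eq_of_lt (by omega)]; omega
    · rw [Nat.mod_eq_of_lt (by omega)]; omega
    · rw [show i + n + n = i + 2 * n by ring, Nat.add_mod_right, Nat.mod_eq_of_lt (by omega)]
      omega

theorem nodcc_f1 (hn : 2 ≤ n) {i j : ℕ} (hij : i + 2 ≤ j) (hjn : j ≤ n)
    (h0n : ¬(i = 0 ∧ j = n)) :
    ¬ diagCrossCentral n s(a + (i : ZMod (2*n)), a + (j : ZMod (2*n))) a ∧
    ¬ diagCrossCentral n s(a + (i : ZMod (2*n)), a + (j : ZMod (2*n))) (a + (n : ZMod (2*n))) := by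
  constructor
  · rw [L_dcc0 a hn i j (by omega) (by omega)]
    unfold cyc; split_ifs <;> omega
  · rw [L_dcc a hn i j n (by omega) (by omega) (by omega)]
    unfold cyc; split_ifs <;> omega

theorem nodcc_f2 (hn : 2 ≤ n) {i j : ℕ} (hij : i + 2 ≤ j) (hjn : j ≤ n)
    (h0n : ¬(i = 0 ∧ j = n)) :
    ¬ diagCrossCentral n s(a + ((i + n : ℕ) : ZMod (2*n)), a + (((j + n) % (2*n) : ℕ) : ZMod (2*n))) a ∧
    ¬ diagCrossCentral n s(a + ((i + n : ℕ) : ZMod (2*n)), a + (((j + n) % (2*n) : ℕ) : ZMod (2*n))) (a + (n : ZMod (2*n))) := by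
  have hv := mod2' (x := j + n) (m := 2*n) (by omega) (by omega)
  constructor
  · rw [L_dcc0 a hn (i+n) ((j+n) % (2*n)) (by omega) (Nat.mod_lt _ (by omega))]
    unfold cyc; split_ifs <;> omega
  · rw [L_dcc a hn (i+n) ((j+n) % (2*n)) n (by omega) (Nat.mod_lt _ (by omega)) (by omega)]
    unfold cyc; split_ifs <;> omega

theorem nocross11 (hn : 2 ≤ n) {i j c d : ℕ} (hij : i + 2 ≤ j) (hjn : j ≤ n)
    (hcd : c + 2 ≤ d) (hdn : d ≤ n)
    (hnc : ¬ PartA.Cross (i, j) (c, d)) :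
    ¬ Crosses (2*n) s(a + (i : ZMod (2*n)), a + (j : ZMod (2*n)))
      s(a + (c : ZMod (2*n)), a + (d : ZMod (2*n))) := by
  rw [L_crosses a hn i j c d (by omega) (by omega) (by omega) (by omega)]
  unfold PartA.Cross at hnc
  simp only [] at hnc
  unfold cyc
  omega

theorem nocross12 (hn : 2 ≤ n) {i j c d : ℕ} (hij : i + 2 ≤ j) (hjn : j ≤ n)
    (hcd : c + 2 ≤ d) (hdn : d ≤ n) :
    ¬ Crosses (2*n) s(a + (i : ZMod (2*n)), a + (j : ZMod (2*n)))
      s(a + ((c + n : ℕ) : ZMod (2*n)), a + (((d + n) % (2*n) : ℕ) : ZMod (2*n))) := by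
  have hv := mod2' (x := d + n) (m := 2*n) (by omega) (by omega)
  rw [L_crosses a hn i j (c+n) ((d+n) % (2*n)) (by omega) (by omega) (by omega) (Nat.mod_lt _ (by omega))]
  unfold cyc
  omega

theorem base_ne (hn : 2 ≤ n) (u : ℕ) (h1 : 0 < u) (h2 : u < 2 * n) :
    a ≠ a + (u : ZMod (2 * n)) := by
  intro h
  have h' : a + ((0 : ℕ) : ZMod (2 * n)) = a + (u : ZMod (2 * n)) := by simpa using h
  have := (L_eq_mod a hn 0 u (by omega)).1 h'
  rw [Nat.mod_eq_of_lt h2] at this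
  omega

theorem yescross11 (hn : 2 ≤ n) {i j c d : ℕ} (hij : i + 2 ≤ j) (hjn : j ≤ n)
    (hcd : c + 2 ≤ d) (hdn : d ≤ n) (h : PartA.Cross (c, d) (i, j)) :
    Crosses (2*n) s(a + (i : ZMod (2*n)), a + (j : ZMod (2*n)))
      s(a + (c : ZMod (2*n)), a + (d : ZMod (2*n))) := by
  rw [L_crosses a hn i j c d (by omega) (by omega) (by omega) (by omega)]
  unfold PartA.Cross at h
  simp only [] at h
  unfold cyc
  omega

theorem crosses_11_iff (hn : 2 ≤ n) {i j c d : ℕ} (hij : i + 2 ≤ j) (hjn : j ≤ n)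
    (hcd : c + 2 ≤ d) (hdn : d ≤ n) :
    Crosses (2*n) s(a + (i : ZMod (2*n)), a + (j : ZMod (2*n)))
      s(a + (c : ZMod (2*n)), a + (d : ZMod (2*n))) ↔ PartA.Cross (c, d) (i, j) := by
  constructor
  · intro h
    rw [L_crosses a hn i j c d (by omega) (by omega) (by omega) (by omega)] at h
    unfold cyc at h
    unfold PartA.Cross
    simp only []
    omega
  · exact yescross11 a hn hij hjn hcd hdn

theorem nocross21 (hn : 2 ≤ n) {i j c d : ℕ} (hij : i + 2 ≤ j) (hjn : j ≤ n)
    (hcd : c + 2 ≤ d) (hdn : d ≤ n) :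
    ¬ Crosses (2*n) s(a + ((i + n : ℕ) : ZMod (2*n)), a + (((j + n) % (2*n) : ℕ) : ZMod (2*n)))
      s(a + (c : ZMod (2*n)), a + (d : ZMod (2*n))) := by
  have hv := mod2' (x := j + n) (m := 2*n) (by omega) (by omega)
  rw [L_crosses a hn (i+n) ((j+n) % (2*n)) c d (by omega) (Nat.mod_lt _ (by omega)) (by omega) (by omega)]
  unfold cyc
  omega

theorem ED_valid (hn : 2 ≤ n) (D : Finset (ℕ × ℕ)) (hD : PartA.MaxNC 0 n D) :
    ∀ e ∈ ED a D, DChord.IsValid n e := by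
  intro e he
  rcases (mem_ED a).1 he with hC | ⟨p, hp, rfl⟩ | ⟨p, hp, rfl⟩
  · rcases (mem_C4 a).1 hC with rfl | rfl | rfl | rfl <;> trivial
  · obtain ⟨i, j⟩ := p
    have hd := hD.1 _ hp
    unfold PartA.IsDiag at hd
    exact valid_f1 a hn hd.2.1 hd.2.2.1 (by simpa using hd.2.2.2)
  · obtain ⟨i, j⟩ := p
    have hd := hD.1 _ hp
    unfold PartA.IsDiag at hd
    exact valid_f2 a hn hd.2.1 hd.2.2.1 (by simpa using hd.2.2.2)

theorem ED_rot (D : Finset (ℕ × ℕ)) : ∀ e ∈ ED a D, DChord.rot n e ∈ ED a D := by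
  intro e he
  rcases (mem_ED a).1 he with hC | ⟨p, hp, rfl⟩ | ⟨p, hp, rfl⟩
  · rcases (mem_C4 a).1 hC with rfl | rfl | rfl | rfl
    · exact (mem_ED a).2 (Or.inl ((mem_C4 a).2 (Or.inr (Or.inr (Or.inl rfl)))))
    · exact (mem_ED a).2 (Or.inl ((mem_C4 a).2 (Or.inr (Or.inr (Or.inr rfl)))))
    · refine (mem_ED a).2 (Or.inl ((mem_C4 a).2 (Or.inl ?_)))
      show DChord.central (a + (n : ZMod (2*n)) + (n : ZMod (2*n))) true = _
      rw [add_assoc, L_nn0, add_zero]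
    · refine (mem_ED a).2 (Or.inl ((mem_C4 a).2 (Or.inr (Or.inl ?_))))
      show DChord.central (a + (n : ZMod (2*n)) + (n : ZMod (2*n))) false = _
      rw [add_assoc, L_nn0, add_zero]
  · rw [rot_f1]
    exact (mem_ED a).2 (Or.inr (Or.inr ⟨p, hp, rfl⟩))
  · rw [rot_f2]
    exact (mem_ED a).2 (Or.inr (Or.inl ⟨p, hp, rfl⟩))

theorem ED_nocross (hn : 2 ≤ n) (D : Finset (ℕ × ℕ)) (hD : PartA.MaxNC 0 n D) :
    ∀ e ∈ ED a D, ∀ f ∈ ED a D, ¬ DChord.Cross n e f := by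
  have hfact : ∀ p ∈ D, p.1 + 2 ≤ p.2 ∧ p.2 ≤ n ∧ ¬(p.1 = 0 ∧ p.2 = n) := by
    intro p hp
    have := hD.1 _ hp
    unfold PartA.IsDiag at this
    exact ⟨this.2.1, this.2.2.1, by simpa using this.2.2.2⟩
  intro e he f hf
  rcases (mem_ED a).1 he with hC | ⟨p, hp, rfl⟩ | ⟨p, hp, rfl⟩ <;>
    rcases (mem_ED a).1 hf with hC' | ⟨q, hq, rfl⟩ | ⟨q, hq, rfl⟩
  · -- C4 vs C4
    rcases (mem_C4 a).1 hC with rfl | rfl | rfl | rfl <;>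
      rcases (mem_C4 a).1 hC' with rfl | rfl | rfl | rfl <;>
      simp [DChord.Cross, add_assoc, L_nn0]
  · -- C4 vs f1
    obtain ⟨i, j⟩ := q
    obtain ⟨h1, h2, h3⟩ := hfact _ hq
    have hno := nodcc_f1 a hn h1 h2 h3
    rcases (mem_C4 a).1 hC with rfl | rfl | rfl | rfl <;>
      first
        | exact fun h => hno.1 h
        | exact fun h => hno.2 h
  · -- C4 vs f2
    obtain ⟨i, j⟩ := q
    obtain ⟨h1, h2, h3⟩ := hfact _ hq
    have hno := nodcc_f2 a hn h1 h2 h3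
    rw [f2_eq]
    rcases (mem_C4 a).1 hC with rfl | rfl | rfl | rfl <;>
      first
        | exact fun h => hno.1 h
        | exact fun h => hno.2 h
  · -- f1 vs C4
    obtain ⟨i, j⟩ := p
    obtain ⟨h1, h2, h3⟩ := hfact _ hp
    have hno := nodcc_f1 a hn h1 h2 h3
    rcases (mem_C4 a).1 hC' with rfl | rfl | rfl | rfl <;>
      first
        | exact fun h => hno.1 h
        | exact fun h => hno.2 h
  · -- f1 vs f1
    obtain ⟨i, j⟩ := p
    obtain ⟨c, d⟩ := q
    obtain ⟨h1, h2, h3⟩ := hfact _ hp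
    obtain ⟨h1', h2', h3'⟩ := hfact _ hq
    exact nocross11 a hn h1 h2 h1' h2' (hD.2.1 _ hp _ hq)
  · -- f1 vs f2
    obtain ⟨i, j⟩ := p
    obtain ⟨c, d⟩ := q
    obtain ⟨h1, h2, h3⟩ := hfact _ hp
    obtain ⟨h1', h2', h3'⟩ := hfact _ hq
    rw [f2_eq]
    exact nocross12 a hn h1 h2 h1' h2'
  · -- f2 vs C4
    obtain ⟨i, j⟩ := p
    obtain ⟨h1, h2, h3⟩ := hfact _ hp
    have hno := nodcc_f2 a hn h1 h2 h3
    rw [f2_eq]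
    rcases (mem_C4 a).1 hC' with rfl | rfl | rfl | rfl <;>
      first
        | exact fun h => hno.1 h
        | exact fun h => hno.2 h
  · -- f2 vs f1
    obtain ⟨i, j⟩ := p
    obtain ⟨c, d⟩ := q
    obtain ⟨h1, h2, h3⟩ := hfact _ hp
    obtain ⟨h1', h2', h3'⟩ := hfact _ hq
    rw [f2_eq]
    exact nocross21 a hn h1 h2 h1' h2'
  · -- f2 vs f2
    obtain ⟨i, j⟩ := p
    obtain ⟨c, d⟩ := q
    obtain ⟨h1, h2, h3⟩ := hfact _ hp
    obtain ⟨h1', h2', h3'⟩ := hfact _ hq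
    rw [f2_eq, f2_eq]
    show ¬ Crosses (2*n) _ _
    rw [f2_map a (i, j), f2_map a (c, d), L_crosses_shift]
    exact nocross11 a hn h1 h2 h1' h2' (hD.2.1 _ hp _ hq)

theorem centrals_in_ED (D : Finset (ℕ × ℕ)) :
    DChord.central a true ∈ ED a D ∧ DChord.central a false ∈ ED a D ∧
    DChord.central (a + (n : ZMod (2*n))) true ∈ ED a D ∧
    DChord.central (a + (n : ZMod (2*n))) false ∈ ED a D := by
  refine ⟨?_, ?_, ?_, ?_⟩ <;> exact (mem_ED a).2 (Or.inl ((mem_C4 a).2 (by tauto)))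

theorem ED_max (hn : 2 ≤ n) (D : Finset (ℕ × ℕ)) (hD : PartA.MaxNC 0 n D) :
    ∀ e, DChord.IsValid n e → e ∉ ED a D → ∃ f ∈ ED a D, DChord.Cross n e f := by
  intro e hval hnotin
  obtain ⟨m1, m2, m3, m4⟩ := centrals_in_ED a D
  match e with
  | .central c b =>
    obtain ⟨u, hu, rfl⟩ := L_point a hn c
    by_cases hu0 : u = 0
    · exfalso
      apply hnotin
      subst hu0
      have hc : a + ((0 : ℕ) : ZMod (2*n)) = a := by simp
      rw [hc]
      cases b
      · exact m2
      · exact m1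
    · by_cases hun : u = n
      · exfalso
        apply hnotin
        subst hun
        cases b
        · exact m4
        · exact m3
      · refine ⟨.central a (!b), ?_, ?_, ?_, ?_⟩
        · cases b
          · exact m1
          · exact m2
        · cases b <;> simp
        · exact base_ne a hn u (by omega) hu
        · rw [show a + (u : ZMod (2*n)) + (n : ZMod (2*n)) = a + ((u + n : ℕ) : ZMod (2*n)) by
            push_cast; ring, ← ZMod.natCast_mod (u + n) (2*n)]
          have hv := mod2' (x := u + n) (m := 2*n) (by omega) (by omega)
          exact base_ne a hn ((u + n) % (2*n)) (by omega) (Nat.mod_lt _ (by omega))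
  | .diag ch =>
    by_cases hd0 : diagCrossCentral n ch a
    · exact ⟨.central a true, m1, hd0⟩
    · by_cases hdn : diagCrossCentral n ch (a + (n : ZMod (2*n)))
      · exact ⟨.central (a + (n : ZMod (2*n))) true, m3, hdn⟩
      · obtain ⟨p, q, h1, h2, h3, h4, hch⟩ := half_decomp a hn ch hval hd0 hdn
        have hdiag : PartA.IsDiag 0 n (p, q) := ⟨Nat.zero_le _, h3, h2, by omega⟩
        rcases hch with hch | hch
        · by_cases hpq : (p, q) ∈ D
          · exact absurd ((mem_ED a).2 (Or.inr (Or.inl ⟨(p,q), hpq, by rw [hch]; rfl⟩))) hnotin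
          · obtain ⟨f', hf', hcr⟩ := hD.2.2 _ hdiag hpq
            obtain ⟨c, dd⟩ := f'
            have hf'd := hD.1 _ hf'
            unfold PartA.IsDiag at hf'd
            refine ⟨f1 a (c, dd), (mem_ED a).2 (Or.inr (Or.inl ⟨(c,dd), hf', rfl⟩)), ?_⟩
            show Crosses (2*n) ch _
            rw [hch]
            exact yescross11 a hn h3 h2 hf'd.2.1 hf'd.2.2.1 hcr
        · by_cases hpq : (p, q) ∈ D
          · exact absurd ((mem_ED a).2 (Or.inr (Or.inr ⟨(p,q), hpq, by rw [f2_eq, hch]⟩))) hnotin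
          · obtain ⟨f', hf', hcr⟩ := hD.2.2 _ hdiag hpq
            obtain ⟨c, dd⟩ := f'
            have hf'd := hD.1 _ hf'
            unfold PartA.IsDiag at hf'd
            refine ⟨f2 a (c, dd), (mem_ED a).2 (Or.inr (Or.inr ⟨(c,dd), hf', rfl⟩)), ?_⟩
            show Crosses (2*n) ch
              s(a + ((c : ℕ) : ZMod (2*n)) + (n : ZMod (2*n)), a + ((dd : ℕ) : ZMod (2*n)) + (n : ZMod (2*n)))
            rw [hch, f2_pair a (c, dd), f2_map a (p, q), f2_map a (c, dd), L_crosses_shift]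
            exact yescross11 a hn h3 h2 hf'd.2.1 hf'd.2.2.1 hcr

theorem ED_pred (hn : 2 ≤ n) (D : Finset (ℕ × ℕ)) (hD : PartA.MaxNC 0 n D) :
    DCSTriangulation n (ED a D) ∧
      DChord.central a true ∈ ED a D ∧
      DChord.central (a + (n : ZMod (2 * n))) true ∈ ED a D ∧
      DChord.central a false ∈ ED a D ∧
      DChord.central (a + (n : ZMod (2 * n))) false ∈ ED a D := by
  obtain ⟨m1, m2, m3, m4⟩ := centrals_in_ED a D
  exact ⟨⟨⟨ED_valid a hn D hD, ED_nocross a hn D hD, ED_max a hn D hD⟩, ED_rot a D⟩,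
    m1, m3, m2, m4⟩

def DT (T : Finset (DChord n)) : Finset (ℕ × ℕ) :=
  (Finset.range (n+1) ×ˢ Finset.range (n+1)).filter (fun p => p.1 + 2 ≤ p.2 ∧ f1 a p ∈ T)

theorem mem_DT {T : Finset (DChord n)} {p : ℕ × ℕ} :
    p ∈ DT a T ↔ p.1 + 2 ≤ p.2 ∧ p.2 ≤ n ∧ f1 a p ∈ T := by
  simp only [DT, Finset.mem_filter, Finset.mem_product, Finset.mem_range]
  constructor
  · rintro ⟨⟨_, h2⟩, h3, h4⟩; exact ⟨h3, by omega, h4⟩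
  · rintro ⟨h3, h2, h4⟩; exact ⟨⟨by omega, by omega⟩, h3, h4⟩

theorem central_class {T : Finset (DChord n)} (hTn : DTriangulation n T)
    (m1 : DChord.central a true ∈ T) (m2 : DChord.central a false ∈ T) :
    ∀ c b, DChord.central c b ∈ T → c = a ∨ c = a + (n : ZMod (2*n)) := by
  intro c b hc
  by_contra hcc
  push_neg at hcc
  have hother : DChord.central a (!b) ∈ T := by
    cases b
    · exact m1
    · exact m2
  have := hTn.2.1 _ hother _ hc
  exact this ⟨by cases b <;> simp, hcc.1, hcc.2⟩

theorem diag_class (hn : 2 ≤ n) {T : Finset (DChord n)} (hTn : DTriangulation n T)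
    (m1 : DChord.central a true ∈ T) (m3 : DChord.central (a + (n : ZMod (2*n))) true ∈ T) :
    ∀ ch, DChord.diag ch ∈ T →
      ∃ p q : ℕ, p < q ∧ q ≤ n ∧ p + 2 ≤ q ∧ q - p < n ∧
        (ch = s(a + (p : ZMod (2 * n)), a + (q : ZMod (2 * n))) ∨
         ch = s(a + ((p + n : ℕ) : ZMod (2 * n)), a + (((q + n) % (2 * n) : ℕ) : ZMod (2 * n)))) := by
  intro ch hch
  have h0 : ¬ diagCrossCentral n ch a := hTn.2.1 _ hch _ m1
  have hn2 : ¬ diagCrossCentral n ch (a + (n : ZMod (2*n))) := hTn.2.1 _ hch _ m3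
  exact half_decomp a hn ch (hTn.1 _ hch) h0 hn2

theorem invalid_0n (hn : 2 ≤ n) : ¬ DChord.IsValid n (f1 a (0, n)) := by
  rintro ⟨x, y, hxy, hne, hadj1, hadj2, hcent⟩
  rw [Sym2.eq_iff] at hxy
  rcases hxy with ⟨h1, h2⟩ | ⟨h1, h2⟩
  · apply hcent
    rw [← h1, ← h2]
    simp
  · apply hcent
    rw [← h1, ← h2]
    rw [add_assoc, L_nn0, add_zero]
    simp

theorem DT_maxnc (hn : 2 ≤ n) {T : Finset (DChord n)} (hTn : DTriangulation n T)
    (m1 : DChord.central a true ∈ T) (m2 : DChord.central a false ∈ T)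
    (m3 : DChord.central (a + (n : ZMod (2*n))) true ∈ T) :
    PartA.MaxNC 0 n (DT a T) := by
  refine ⟨?_, ?_, ?_⟩
  · intro e he
    rw [mem_DT] at he
    refine ⟨Nat.zero_le _, he.1, he.2.1, ?_⟩
    rintro ⟨h0, hnn⟩
    apply invalid_0n a hn
    have : e = (0, n) := Prod.ext h0 hnn
    rw [← this]
    exact hTn.1 _ he.2.2
  · intro e he f hf
    rw [mem_DT] at he hf
    obtain ⟨i, j⟩ := e
    obtain ⟨c, dd⟩ := f
    have := hTn.2.1 _ hf.2.2 _ he.2.2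
    rw [show DChord.Cross n (f1 a (c, dd)) (f1 a (i, j)) =
      Crosses (2*n) s(a + ((c:ℕ) : ZMod (2*n)), a + ((dd:ℕ) : ZMod (2*n)))
        s(a + ((i:ℕ) : ZMod (2*n)), a + ((j:ℕ) : ZMod (2*n))) from rfl] at this
    rw [crosses_11_iff a hn hf.1 hf.2.1 he.1 he.2.1] at this
    exact this
  · intro e hed hen
    obtain ⟨i, j⟩ := e
    unfold PartA.IsDiag at hed
    have h0n : ¬(i = 0 ∧ j = n) := by simpa using hed.2.2.2
    have hvalid : DChord.IsValid n (f1 a (i, j)) := valid_f1 a hn hed.2.1 hed.2.2.1 h0n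
    have hnotT : f1 a (i, j) ∉ T := by
      intro hmem
      exact hen ((mem_DT a).2 ⟨hed.2.1, hed.2.2.1, hmem⟩)
    obtain ⟨f, hfT, hcr⟩ := hTn.2.2 _ hvalid hnotT
    match f, hfT with
    | .central c b, hfT =>
      exfalso
      have hc := central_class a hTn m1 m2 c b hfT
      have hno := nodcc_f1 a hn hed.2.1 hed.2.2.1 h0n
      rcases hc with rfl | rfl
      · exact hno.1 hcr
      · exact hno.2 hcr
    | .diag ch, hfT =>
      obtain ⟨p, q, h1, h2, h3, h4, hch⟩ := diag_class a hn hTn m1 m3 ch hfT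
      rcases hch with hch | hch
      · refine ⟨(p, q), ?_, ?_⟩
        · refine (mem_DT a).2 ⟨h3, h2, ?_⟩
          show DChord.diag _ ∈ T
          rw [← hch]
          exact hfT
        · have : Crosses (2*n) s(a + ((i:ℕ) : ZMod (2*n)), a + ((j:ℕ) : ZMod (2*n)))
              s(a + ((p:ℕ) : ZMod (2*n)), a + ((q:ℕ) : ZMod (2*n))) := by
            rw [← hch]
            exact hcr
          rw [crosses_11_iff a hn hed.2.1 hed.2.2.1 h3 h2] at this
          exact this
      · exfalso
        have : Crosses (2*n) s(a + ((i:ℕ) : ZMod (2*n)), a + ((j:ℕ) : ZMod (2*n)))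
            s(a + ((p + n : ℕ) : ZMod (2*n)), a + (((q + n) % (2*n) : ℕ) : ZMod (2*n))) := by
          rw [← hch]
          exact hcr
        exact nocross12 a hn hed.2.1 hed.2.2.1 h3 h2 this

theorem ED_DT_eq (hn : 2 ≤ n) {T : Finset (DChord n)} (hTn : DTriangulation n T)
    (hrot : ∀ e ∈ T, DChord.rot n e ∈ T)
    (m1 : DChord.central a true ∈ T) (m2 : DChord.central a false ∈ T)
    (m3 : DChord.central (a + (n : ZMod (2*n))) true ∈ T)
    (m4 : DChord.central (a + (n : ZMod (2*n))) false ∈ T) :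
    ED a (DT a T) = T := by
  ext x
  constructor
  · intro hx
    rcases (mem_ED a).1 hx with hC | ⟨p, hp, rfl⟩ | ⟨p, hp, rfl⟩
    · rcases (mem_C4 a).1 hC with rfl | rfl | rfl | rfl
      · exact m1
      · exact m2
      · exact m3
      · exact m4
    · exact ((mem_DT a).1 hp).2.2
    · rw [← rot_f1]
      exact hrot _ ((mem_DT a).1 hp).2.2
  · intro hx
    cases x with
    | central c b =>
      rcases central_class a hTn m1 m2 c b hx with hc | hc <;>
        rw [hc] <;>
        refine (mem_ED a).2 (Or.inl ((mem_C4 a).2 ?_)) <;>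
        cases b <;> tauto
    | diag ch =>
      obtain ⟨p, q, h1, h2, h3, h4, hch⟩ := diag_class a hn hTn m1 m3 ch hx
      rcases hch with hch | hch
      · refine (mem_ED a).2 (Or.inr (Or.inl ⟨(p, q), ?_, ?_⟩))
        · refine (mem_DT a).2 ⟨h3, h2, ?_⟩
          show DChord.diag _ ∈ T
          rw [← hch]
          exact hx
        · show DChord.diag _ = _
          rw [← hch]
      · refine (mem_ED a).2 (Or.inr (Or.inr ⟨(p, q), ?_, ?_⟩))
        · refine (mem_DT a).2 ⟨h3, h2, ?_⟩
          have : f1 a (p, q) = DChord.rot n (.diag ch) := by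
            rw [← rot_f2 a (p, q)]
            congr 1
            rw [f2_eq]
            show DChord.diag _ = DChord.diag _
            rw [← hch]
          rw [this]
          exact hrot _ hx
        · rw [f2_eq]
          show DChord.diag _ = DChord.diag _
          rw [← hch]

theorem f1_inj (hn : 2 ≤ n) {i j c d : ℕ} (h1 : i + 2 ≤ j) (h2 : j ≤ n)
    (h3 : c + 2 ≤ d) (h4 : d ≤ n) (h : f1 a (i, j) = f1 a (c, d)) : i = c ∧ j = d := by
  simp only [f1, DChord.diag.injEq] at h
  rw [Sym2.eq_iff] at h
  rcases h with ⟨e1, e2⟩ | ⟨e1, e2⟩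
  · have q1 := (L_eq_mod a hn i c (by omega)).1 e1
    have q2 := (L_eq_mod a hn j d (by omega)).1 e2
    rw [Nat.mod_eq_of_lt (by omega)] at q1
    rw [Nat.mod_eq_of_lt (by omega)] at q2
    exact ⟨q1, q2⟩
  · have q1 := (L_eq_mod a hn i d (by omega)).1 e1
    have q2 := (L_eq_mod a hn j c (by omega)).1 e2
    rw [Nat.mod_eq_of_lt (by omega)] at q1
    rw [Nat.mod_eq_of_lt (by omega)] at q2
    omega

theorem f1_ne_f2 (hn : 2 ≤ n) {i j c d : ℕ} (h1 : i + 2 ≤ j) (h2 : j ≤ n)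
    (h3 : c + 2 ≤ d) (h4 : d ≤ n) (h5 : ¬(c = 0 ∧ d = n)) :
    f1 a (i, j) ≠ f2 a (c, d) := by
  intro h
  rw [f2_eq] at h
  simp only [f1, DChord.diag.injEq] at h
  rw [Sym2.eq_iff] at h
  have hv := mod2' (x := d + n) (m := 2*n) (by omega) (by omega)
  rcases h with ⟨e1, e2⟩ | ⟨e1, e2⟩
  · have q1 := (L_eq_mod a hn i (c+n) (by omega)).1 e1
    rw [Nat.mod_eq_of_lt (by omega)] at q1
    omega
  · have q1 := (L_eq_mod a hn i ((d+n) % (2*n)) (by omega)).1 e1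
    have q2 := (L_eq_mod a hn j (c+n) (by omega)).1 e2
    rw [Nat.mod_eq_of_lt (Nat.mod_lt _ (by omega))] at q1
    rw [Nat.mod_eq_of_lt (by omega)] at q2
    omega

theorem DT_ED (hn : 2 ≤ n) (D : Finset (ℕ × ℕ)) (hD : PartA.MaxNC 0 n D) :
    DT a (ED a D) = D := by
  have hfact : ∀ p ∈ D, p.1 + 2 ≤ p.2 ∧ p.2 ≤ n ∧ ¬(p.1 = 0 ∧ p.2 = n) := by
    intro p hp
    have := hD.1 _ hp
    unfold PartA.IsDiag at this
    exact ⟨this.2.1, this.2.2.1, by simpa using this.2.2.2⟩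
  ext p
  rw [mem_DT a]
  constructor
  · rintro ⟨hb1, hb2, hmem⟩
    obtain ⟨i, j⟩ := p
    rcases (mem_ED a).1 hmem with hC | ⟨p', hp', heq⟩ | ⟨p', hp', heq⟩
    · exfalso
      rcases (mem_C4 a).1 hC with h | h | h | h <;> simp [f1] at h
    · obtain ⟨c, dd⟩ := p'
      obtain ⟨hc1, hc2, hc3⟩ := hfact _ hp'
      obtain ⟨rfl, rfl⟩ := f1_inj a hn hc1 hc2 hb1 hb2 heq
      exact hp'
    · exfalso
      obtain ⟨c, dd⟩ := p'
      obtain ⟨hc1, hc2, hc3⟩ := hfact _ hp'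
      exact f1_ne_f2 a hn hb1 hb2 hc1 hc2 hc3 heq.symm
  · intro hp
    obtain ⟨h1, h2, h3⟩ := hfact _ hp
    exact ⟨h1, h2, (mem_ED a).2 (Or.inr (Or.inl ⟨p, hp, rfl⟩))⟩

theorem count (hn : 2 ≤ n) :
    Nat.card {T : Finset (DChord n) // DCSTriangulation n T ∧
        DChord.central a true ∈ T ∧ DChord.central (a + (n : ZMod (2 * n))) true ∈ T ∧
        DChord.central a false ∈ T ∧ DChord.central (a + (n : ZMod (2 * n))) false ∈ T} =
      catalan (n - 1) := by
  set g : {D : Finset (ℕ × ℕ) // PartA.MaxNC 0 n D} →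
      {T : Finset (DChord n) // DCSTriangulation n T ∧
        DChord.central a true ∈ T ∧ DChord.central (a + (n : ZMod (2 * n))) true ∈ T ∧
        DChord.central a false ∈ T ∧ DChord.central (a + (n : ZMod (2 * n))) false ∈ T} :=
    fun D => ⟨ED a D.1, ED_pred a hn D.1 D.2⟩ with hg
  have hbij : Function.Bijective g := by
    constructor
    · intro D D' h
      have h' : ED a D.1 = ED a D'.1 := congrArg Subtype.val h
      apply Subtype.ext
      rw [← DT_ED a hn _ D.2, ← DT_ED a hn _ D'.2, h']
    · rintro ⟨T, ⟨hTn, hrot⟩, m1, m3, m2, m4⟩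
      refine ⟨⟨DT a T, DT_maxnc a hn hTn m1 m2 m3⟩, Subtype.ext ?_⟩
      exact ED_DT_eq a hn hTn hrot m1 m2 m3 m4
  rw [← Nat.card_eq_of_bijective g hbij]
  have := PartA.cardA n 0 n (by omega) (by omega)
  simpa using this

end PartB

/-- For `n ≥ 2` and a pair `r = {a, a + n}` of opposite vertices of the punctured `2n`-gon, the
intersection `Ψ(↻ r) ∩ Ψ(↺ r)` of the classes of centrally symmetric triangulations
containing both the clockwise and the counterclockwise central chord pairs at `r` has
cardinality the Catalan number `C_{n-1}`. -/
theorem typeD_class_intersection_card (n : ℕ) (hn : 2 ≤ n) (a : ZMod (2 * n)) :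
    Nat.card {T : Finset (DChord n) // DCSTriangulation n T ∧
        DChord.central a true ∈ T ∧ DChord.central (a + (n : ZMod (2 * n))) true ∈ T ∧
        DChord.central a false ∈ T ∧ DChord.central (a + (n : ZMod (2 * n))) false ∈ T} =
      catalan (n - 1) := by
  exact PartB.count a hn
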